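/- Let (H^n)_{n∈ℕ} be a decreasing-type family of σ-algebras on a probability space generated as H^n = σ(ζ·1_{ζ ≥ n}) for a nonnegative random variable ζ satisfying P(ζ ≥ n) ≤ C/(n - γ) for all n > γ (constants C, γ > 0). Then the tail σ-algebra H^∞ = ⋂_{m∈ℕ} ⋁_{n≥m} H^n is trivial: every A ∈ H^∞ has P(A) ∈ {0, 1}. -/
import Mathlib


open MeasureTheory

/-- Let `H^n = σ(ζ·1_{ζ ≥ n})` for a nonnegative random variable `ζ` satisfying
`P(ζ ≥ n) ≤ C/(n - γ)` for all `n > γ`. Then the tail σ-algebra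
`H^∞ = ⋂_m ⋁_{n ≥ m} H^n` is trivial: every `A ∈ H^∞` has `P(A) ∈ {0, 1}`. -/
theorem tail_sigma_algebra_trivial {Ω : Type*} [MeasurableSpace Ω]
    (μ : Measure Ω) [IsProbabilityMeasure μ]
    (ζ : Ω → ℝ) (hζmeas : Measurable ζ) (hζ0 : ∀ ω, 0 ≤ ζ ω)
    (C γ : ℝ) (hC : 0 < C) (hγ : 0 < γ)
    (htail : ∀ n : ℕ, γ < (n : ℝ) → (μ {ω | (n : ℝ) ≤ ζ ω}).toReal ≤ C / ((n : ℝ) - γ))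
    (H : ℕ → MeasurableSpace Ω)
    (hH : ∀ n : ℕ, H n =
      MeasurableSpace.comap (fun ω => if (n : ℝ) ≤ ζ ω then ζ ω else 0) inferInstance)
    (A : Set Ω)
    (hA : MeasurableSet[⨅ m : ℕ, ⨆ n : ℕ, ⨆ _ : m ≤ n, H n] A) :
    μ A = 0 ∨ μ A = 1 := by
  classical
  have hfmeas : ∀ n : ℕ, Measurable (fun ω => if (n : ℝ) ≤ ζ ω then ζ ω else 0) :=
    fun n => Measurable.ite (measurableSet_le measurable_const hζmeas) hζmeas measurable_const
  -- A is measurable in the ambient σ-algebra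
  have htail_le : (⨅ m : ℕ, ⨆ n : ℕ, ⨆ _ : m ≤ n, H n) ≤ ‹MeasurableSpace Ω› := by
    refine le_trans (iInf_le _ 0) ?_
    refine iSup_le fun n => iSup_le fun _ => ?_
    rw [hH n]
    exact MeasurableSpace.comap_le_iff_le_map.mpr (hfmeas n).le_map
  have hAmeas : MeasurableSet A := htail_le _ hA
  -- Key dichotomy
  have hdich : ∀ m : ℕ, {ω | ζ ω < (m : ℝ)} ⊆ A ∨ A ∩ {ω | ζ ω < (m : ℝ)} = ∅ := by
    intro m
    set L : Set Ω := {ω | ζ ω < (m : ℝ)} with hLdef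
    let T : MeasurableSpace Ω :=
      { MeasurableSet' := fun s => L ⊆ s ∨ s ∩ L = ∅
        measurableSet_empty := Or.inr (Set.empty_inter L)
        measurableSet_compl := by
          rintro s (h | h)
          · right
            rw [Set.eq_empty_iff_forall_notMem]
            rintro x ⟨hxs, hxL⟩
            exact hxs (h hxL)
          · left
            intro x hx hxs
            rw [Set.eq_empty_iff_forall_notMem] at h
            exact h x ⟨hxs, hx⟩
        measurableSet_iUnion := by
          intro g hg
          by_cases hex : ∃ i, L ⊆ g i
          · obtain ⟨i, hi⟩ := hex
            exact Or.inl (hi.trans (Set.subset_iUnion g i))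
          · right
            rw [Set.iUnion_inter, Set.iUnion_eq_empty]
            intro i
            rcases hg i with h | h
            · exact absurd ⟨i, h⟩ hex
            · exact h }
    have hle : (⨅ m : ℕ, ⨆ n : ℕ, ⨆ _ : m ≤ n, H n) ≤ T := by
      refine le_trans (iInf_le _ m) ?_
      refine iSup_le fun n => iSup_le fun hmn => ?_
      rw [hH n]
      rintro s ⟨B, hB, rfl⟩
      have hzero : ∀ x ∈ L, (fun ω => if (n : ℝ) ≤ ζ ω then ζ ω else 0) x = 0 := by
        intro x hx
        have hlt : ¬ ((n : ℝ) ≤ ζ x) := by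
          push_neg
          exact lt_of_lt_of_le hx (by exact_mod_cast hmn)
        simp [hlt]
      by_cases h0 : (0 : ℝ) ∈ B
      · left
        intro x hx
        show (fun ω => if (n : ℝ) ≤ ζ ω then ζ ω else 0) x ∈ B
        rw [hzero x hx]
        exact h0
      · right
        rw [Set.eq_empty_iff_forall_notMem]
        rintro x ⟨hxs, hxL⟩
        have : (fun ω => if (n : ℝ) ≤ ζ ω then ζ ω else 0) x ∈ B := hxs
        rw [hzero x hxL] at this
        exact h0 this
    exact hle A hA
  -- A set contained in all tails {ζ ≥ m} has measure zero
  have hbound : ∀ B : Set Ω, (∀ m : ℕ, B ⊆ {ω | (m : ℝ) ≤ ζ ω}) → μ B = 0 := by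
    intro B hB
    have key : ∀ ε : ℝ, 0 < ε → (μ B).toReal ≤ ε := by
      intro ε hε
      obtain ⟨m, hm⟩ := exists_nat_gt (γ + C / ε)
      have hCε : 0 < C / ε := div_pos hC hε
      have hγm : γ < (m : ℝ) := by linarith
      have h1 : (μ B).toReal ≤ (μ {ω | (m : ℝ) ≤ ζ ω}).toReal :=
        ENNReal.toReal_mono (measure_ne_top μ _) (measure_mono (hB m))
      have h2 := htail m hγm
      have h3 : C / ((m : ℝ) - γ) ≤ ε := by
        rw [div_le_iff₀ (by linarith)]
        have hcle : C / ε ≤ (m : ℝ) - γ := by linarith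
        calc C = ε * (C / ε) := by field_simp
          _ ≤ ε * ((m : ℝ) - γ) := by
              exact mul_le_mul_of_nonneg_left hcle hε.le
      linarith
    have htr : (μ B).toReal = 0 := by
      refine le_antisymm ?_ ENNReal.toReal_nonneg
      refine le_of_forall_pos_le_add fun ε hε => ?_
      have := key ε hε
      linarith
    rcases (ENNReal.toReal_eq_zero_iff _).mp htr with h | h
    · exact h
    · exact absurd h (measure_ne_top μ B)
  by_cases hex : ∃ m : ℕ, ({ω | ζ ω < (m : ℝ)}).Nonempty ∧ {ω | ζ ω < (m : ℝ)} ⊆ A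
  · right
    obtain ⟨m0, ⟨ω0, hω0⟩, hsub⟩ := hex
    have hsub' : ∀ m : ℕ, {ω | ζ ω < (m : ℝ)} ⊆ A := by
      intro m
      rcases hdich m with h | h
      · exact h
      · rcases le_total m m0 with hmm | hmm
        · intro x hx
          have hx' : ζ x < (m : ℝ) := hx
          exact hsub (show ζ x < (m0 : ℝ) from lt_of_lt_of_le hx' (Nat.cast_le.mpr hmm))
        · exfalso
          have hω0A : ω0 ∈ A := hsub hω0
          have hω0' : ζ ω0 < (m0 : ℝ) := hω0
          have hω0L : ω0 ∈ {ω | ζ ω < (m : ℝ)} :=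
            show ζ ω0 < (m : ℝ) from lt_of_lt_of_le hω0' (Nat.cast_le.mpr hmm)
          rw [Set.eq_empty_iff_forall_notMem] at h
          exact h ω0 ⟨hω0A, hω0L⟩
    have hAc : μ Aᶜ = 0 := by
      refine hbound Aᶜ fun m x hx => ?_
      by_contra hlt
      have hlt' : ζ x < (m : ℝ) := lt_of_not_ge hlt
      exact hx (hsub' m hlt')
    exact (prob_compl_eq_zero_iff hAmeas).mp hAc
  · left
    refine hbound A fun m x hx => ?_
    push_neg at hex
    have hdisj : A ∩ {ω | ζ ω < (m : ℝ)} = ∅ := by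
      rcases hdich m with h | h
      · rcases Set.eq_empty_or_nonempty {ω | ζ ω < (m : ℝ)} with he | hne
        · rw [he, Set.inter_empty]
        · exact absurd h (hex m hne)
      · exact h
    by_contra hlt
    have hlt' : ζ x < (m : ℝ) := lt_of_not_ge hlt
    rw [Set.eq_empty_iff_forall_notMem] at hdisj
    exact hdisj x ⟨hx, hlt'⟩
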